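/- Let A, B ⊆ ℕ and let γ be a numbering. If for every total A-computable binary function h: ℕ × ℕ → ℕ there is a total B-computable function f: ℕ → ℕ such that h(n, f(n)) ∼_γ f(n) for all n, then A ≤_γ B. -/

import Mathlib

open Nat Part

/-- Partial functions on `ℕ` computable relative to an oracle set `A`. -/
inductive RecursiveInSet (A : Set ℕ) : (ℕ →. ℕ) → Prop
  | zero : RecursiveInSet A (pure 0)
  | succ : RecursiveInSet A ↑Nat.succ
  | left : RecursiveInSet A ↑fun n : ℕ => n.unpair.1
  | right : RecursiveInSet A ↑fun n : ℕ => n.unpair.2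
  | oracle : RecursiveInSet A ↑fun n : ℕ => A.indicator 1 n
  | pair {f g} : RecursiveInSet A f → RecursiveInSet A g →
      RecursiveInSet A fun n => Nat.pair <$> f n <*> g n
  | comp {f g} : RecursiveInSet A f → RecursiveInSet A g →
      RecursiveInSet A fun n => g n >>= f
  | prec {f g} : RecursiveInSet A f → RecursiveInSet A g →
      RecursiveInSet A (Nat.unpaired fun a n =>
        n.rec (f a) fun y IH => do let i ← IH; g (Nat.pair a (Nat.pair y i)))
  | rfind {f} : RecursiveInSet A f →
      RecursiveInSet A fun a => Nat.rfind fun n => (fun m => m = 0) <$> f (Nat.pair a n)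

/-- A total function `f : ℕ → ℕ` is `A`-computable. -/
def ComputableInSet (A : Set ℕ) (f : ℕ → ℕ) : Prop :=
  RecursiveInSet A fun n => Part.some (f n)

/-- A total binary function is `A`-computable. -/
def ComputableInSet₂ (A : Set ℕ) (h : ℕ → ℕ → ℕ) : Prop :=
  ComputableInSet A fun n => h n.unpair.1 n.unpair.2

/-- The characteristic function of a set of naturals. -/
noncomputable def chi (A : Set ℕ) : ℕ → ℕ := A.indicator 1

/-- Turing reducibility: `A ≤_T B`. -/
def TuringLE (A B : Set ℕ) : Prop := ComputableInSet B (chi A)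

/-- `A` is computable. -/
def SetComputable (A : Set ℕ) : Prop := ComputableInSet ∅ (chi A)

/-- `X` is computably enumerable in `A`: `X` is the domain of a partial
`A`-computable function. -/
def CEIn (A : Set ℕ) (X : Set ℕ) : Prop :=
  ∃ p : ℕ →. ℕ, RecursiveInSet A p ∧ X = p.Dom

/-- `A ≤_γ B` (`A` is `(γ,B)`-low): every total `A`-computable function has a
`B`-computable `γ`-lift. -/
def GammaLE (γ : ℕ → ℕ → Prop) (A B : Set ℕ) : Prop :=
  ∀ f : ℕ → ℕ, ComputableInSet A f →
    ∃ g : ℕ → ℕ, ComputableInSet B g ∧ ∀ n, γ (f n) (g n)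

/-- `A` is `γ`-low: `A ≤_γ ∅`. -/
def GammaLow (γ : ℕ → ℕ → Prop) (A : Set ℕ) : Prop := GammaLE γ A ∅

/-- `γ` is `(n, A)`-divisible (for finite `n`). -/
def DivisibleFin (γ : ℕ → ℕ → Prop) (n : ℕ) (A : Set ℕ) : Prop :=
  ∃ (x : Fin n → ℕ) (X : Fin n → Set ℕ),
    (∀ i, CEIn A (X i)) ∧
    (∀ i, {m | γ (x i) m} ⊆ X i) ∧
    (∀ i j, i ≠ j → {m | γ (x i) m} ∩ X j = ∅)

/-- `γ` is `(ω, A)`-divisible. -/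
def DivisibleOmega (γ : ℕ → ℕ → Prop) (A : Set ℕ) : Prop :=
  ∃ (x : ℕ → ℕ) (X : ℕ → Set ℕ),
    ComputableInSet A x ∧
    CEIn A {k : ℕ | k.unpair.2 ∈ X k.unpair.1} ∧
    (∀ i, {m | γ (x i) m} ⊆ X i) ∧
    (∀ i j, i ≠ j → {m | γ (x i) m} ∩ X j = ∅)

/-- `γ` is `A`-precomplete: every partial `A`-computable function has a total
`A`-computable totalization modulo `γ`. -/
def PrecompleteIn (γ : ℕ → ℕ → Prop) (A : Set ℕ) : Prop :=
  ∀ ψ : ℕ →. ℕ, RecursiveInSet A ψ →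
    ∃ f : ℕ → ℕ, ComputableInSet A f ∧ ∀ n, ∀ y ∈ ψ n, γ y (f n)

/-- `γ` is a c.e. numbering. -/
def CENumbering (γ : ℕ → ℕ → Prop) : Prop :=
  CEIn ∅ {k : ℕ | γ k.unpair.1 k.unpair.2}

/-- The `e`-th partial computable function. -/
def phi (e : ℕ) : ℕ →. ℕ := (Denumerable.ofNat Nat.Partrec.Code e).eval

/-- The `e`-th computably enumerable set. -/
def Wset (e : ℕ) : Set ℕ := (phi e).Dom

/-- The halting set `∅'`. -/
def halting : Set ℕ := {e : ℕ | (phi e e).Dom}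

namespace ComputableInSet

variable {A : Set ℕ}

theorem comp {f g : ℕ → ℕ} (hf : ComputableInSet A f) (hg : ComputableInSet A g) :
    ComputableInSet A (f ∘ g) := by
  simpa only [ComputableInSet, Function.comp_apply, Part.bind_eq_bind, Part.bind_some] using
    RecursiveInSet.comp hf hg

theorem unpair_fst : ComputableInSet A fun n => n.unpair.1 := RecursiveInSet.left

end ComputableInSet

theorem gammaLE_of_skolem_general (γ : ℕ → ℕ → Prop)
    (A B : Set ℕ)
    (hsk : ∀ h : ℕ → ℕ → ℕ, ComputableInSet₂ A h →
      ∃ f : ℕ → ℕ, ComputableInSet B f ∧ ∀ n : ℕ, γ (h n (f n)) (f n)) :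
    GammaLE γ A B := by
  intro f hf
  obtain ⟨g, hg, hfix⟩ := hsk (fun n _ => f n) (hf.comp .unpair_fst)
  exact ⟨g, hg, hfix⟩

/-- If every total `A`-computable binary function has a
`B`-computable Skolem function for fixpoints modulo `γ`, then `A ≤_γ B`. -/
theorem gammaLE_of_skolem (γ : ℕ → ℕ → Prop) (hγ : Equivalence γ)
    (A B : Set ℕ)
    (hsk : ∀ h : ℕ → ℕ → ℕ, ComputableInSet₂ A h →
      ∃ f : ℕ → ℕ, ComputableInSet B f ∧ ∀ n : ℕ, γ (h n (f n)) (f n)) :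
    GammaLE γ A B :=
  gammaLE_of_skolem_general γ A B hsk
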